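/- If P1 is a perfect elimination scheme witnessing that a graph H1 is a 3-tree, and P2 = x y z ... is a perfect elimination scheme witnessing that a vertex-disjoint graph H2 is a 3-tree starting with triangle xyz, then the concatenation P1 P2 is a perfect elimination scheme witnessing that the graph H1 ∪ H2 plus the edges xa, xb, xc, ya, yb, za (where abc is a triangle of H1) is a 3-tree. -/

import Mathlib

open SimpleGraph

/-- A finite-style graph: a subgraph of the complete graph on `ℕ`,
i.e. a graph together with its vertex set `verts ⊆ ℕ`. -/
abbrev FGraph := SimpleGraph.Subgraph (⊤ : SimpleGraph ℕ)

/-- The complete graph on the vertex set `s`. -/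
def cliqueGraph (s : Finset ℕ) : FGraph where
  verts := ↑s
  Adj u v := u ∈ s ∧ v ∈ s ∧ u ≠ v
  adj_sub h := h.2.2
  edge_vert h := h.1
  symm := ⟨fun u v h => ⟨h.2.1, h.1, h.2.2.symm⟩⟩

/-- Add a new vertex `v` to `G`, joined to the vertices of `s` (which are in `G`). -/
def addVertex (G : FGraph) (v : ℕ) (s : Finset ℕ) : FGraph where
  verts := insert v G.verts
  Adj x y := G.Adj x y ∨ (x = v ∧ y ≠ v ∧ y ∈ s ∧ y ∈ G.verts)
    ∨ (y = v ∧ x ≠ v ∧ x ∈ s ∧ x ∈ G.verts)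
  adj_sub h := by
    rcases h with h | h | h
    · exact G.adj_sub h
    · exact fun e => h.2.1 (by rw [← e, h.1])
    · exact fun e => h.2.1 (by rw [e, h.1])
  edge_vert h := by
    rcases h with h | h | h
    · exact Set.mem_insert_of_mem _ (G.edge_vert h)
    · exact h.1 ▸ Set.mem_insert _ _
    · exact Set.mem_insert_of_mem _ h.2.2.2
  symm := ⟨fun x y h => by
    rcases h with h | h | h
    · exact Or.inl (G.adj_symm h)
    · exact Or.inr (Or.inr h)
    · exact Or.inr (Or.inl h)⟩

/-- `s` is a clique (of pairwise adjacent vertices) in `G`. -/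
def IsCliqueIn (G : FGraph) (s : Finset ℕ) : Prop :=
  ↑s ⊆ G.verts ∧ ∀ u ∈ s, ∀ v ∈ s, u ≠ v → G.Adj u v

/-- `k`-trees: start from a `k`-clique and repeatedly add a vertex joined to an
existing `k`-clique. -/
inductive IsKTree (k : ℕ) : FGraph → Prop
  | base (s : Finset ℕ) (hs : s.card = k) : IsKTree k (cliqueGraph s)
  | grow (G : FGraph) (hG : IsKTree k G) (s : Finset ℕ) (hs : s.card = k)
      (hclique : IsCliqueIn G s) (v : ℕ) (hv : v ∉ G.verts) :
      IsKTree k (addVertex G v s)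

/-- A partial `k`-tree is a subgraph of a `k`-tree. -/
def IsPartialKTree (k : ℕ) (G : FGraph) : Prop := ∃ H : FGraph, IsKTree k H ∧ G ≤ H

/-- Add the single edge `uv` (and its endpoints) to `G`. -/
def addEdge (G : FGraph) (u v : ℕ) : FGraph where
  verts := insert u (insert v G.verts)
  Adj x y := G.Adj x y ∨ (x = u ∧ y = v ∧ u ≠ v) ∨ (x = v ∧ y = u ∧ u ≠ v)
  adj_sub h := by
    rcases h with h | h | h
    · exact G.adj_sub h
    · exact fun e => h.2.2 (by rw [← h.1, ← h.2.1, e])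
    · exact fun e => h.2.2 (by rw [← h.1, ← h.2.1, e])
  edge_vert h := by
    rcases h with h | h | h
    · exact Set.mem_insert_of_mem _ (Set.mem_insert_of_mem _ (G.edge_vert h))
    · exact h.1 ▸ Set.mem_insert _ _
    · exact h.1 ▸ Set.mem_insert_of_mem _ (Set.mem_insert _ _)
  symm := ⟨fun x y h => by
    rcases h with h | h | h
    · exact Or.inl (G.adj_symm h)
    · exact Or.inr (Or.inr ⟨h.2.1, h.1, h.2.2⟩)
    · exact Or.inr (Or.inl ⟨h.2.1, h.1, h.2.2⟩)⟩

/-- `G` is a minor of `H`: there are pairwise disjoint nonempty connected branch sets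
in `H`, one for each vertex of `G`, with an `H`-edge between the branch sets of any
two `G`-adjacent vertices. -/
def IsMinor (G H : FGraph) : Prop :=
  ∃ β : ℕ → Finset ℕ,
    (∀ u ∈ G.verts, (β u).Nonempty ∧ ↑(β u) ⊆ H.verts ∧ (H.induce ↑(β u)).coe.Connected) ∧
    (∀ u ∈ G.verts, ∀ v ∈ G.verts, u ≠ v → Disjoint (β u) (β v)) ∧
    (∀ u v, G.Adj u v → ∃ x ∈ β u, ∃ y ∈ β v, H.Adj x y)

/-- The complete graph `K₅`. -/
def K5g : FGraph := cliqueGraph {0, 1, 2, 3, 4}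

/-- The complete bipartite graph `K₃,₃` with parts `{0,1,2}` and `{3,4,5}`. -/
def K33g : FGraph where
  verts := {n : ℕ | n < 6}
  Adj u v := (u < 3 ∧ 3 ≤ v ∧ v < 6) ∨ (v < 3 ∧ 3 ≤ u ∧ u < 6)
  adj_sub := fun {u v} h => by rcases h with h | h <;> exact show u ≠ v by omega
  edge_vert := fun {u v} h => by rcases h with h | h <;> exact show u < 6 by omega
  symm := ⟨fun u v h => by tauto⟩

/-- Planarity via Wagner's theorem: no `K₅` and no `K₃,₃` minor. -/
def Planar (G : FGraph) : Prop := ¬ IsMinor K5g G ∧ ¬ IsMinor K33g G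

/-- In a maximal planar graph (planar triangulation), the triangle `abc` bounds a face:
combinatorially, a new vertex can be placed inside it and joined to `a`, `b`, `c`
while preserving planarity. -/
def IsFaceTriangle (G : FGraph) (a b c : ℕ) : Prop :=
  G.Adj a b ∧ G.Adj b c ∧ G.Adj a c ∧
  ∀ v, v ∉ G.verts → Planar (addVertex G v {a, b, c})

/-- A perfect elimination scheme witnessing that `H` is a `k`-tree: a listing of the
vertices of `H` whose first `k` entries form a clique and each later entry has exactly
`k` earlier neighbours, which form a clique. -/
def IsPESk (k : ℕ) (l : List ℕ) (H : FGraph) : Prop :=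
  l.Nodup ∧ H.verts = {v | v ∈ l} ∧ k ≤ l.length ∧
  (∀ i j : Fin l.length, (i : ℕ) < k → (j : ℕ) < k → i ≠ j → H.Adj (l.get i) (l.get j)) ∧
  (∀ i : Fin l.length, k ≤ (i : ℕ) →
    ∃ s : Finset (Fin l.length), s.card = k ∧ (∀ j ∈ s, (j : ℕ) < (i : ℕ)) ∧
      (∀ a ∈ s, ∀ b ∈ s, a ≠ b → H.Adj (l.get a) (l.get b)) ∧
      (∀ j : Fin l.length, (j : ℕ) < (i : ℕ) → (H.Adj (l.get j) (l.get i) ↔ j ∈ s)))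

/-- A vertex is simplicial if its neighbourhood induces a clique. -/
def IsSimplicial (G : FGraph) (v : ℕ) : Prop :=
  v ∈ G.verts ∧ ∀ u w, G.Adj v u → G.Adj v w → u ≠ w → G.Adj u w

/-- A graph is chordal if it has no induced cycle of length greater than 3. -/
def IsChordal (G : FGraph) : Prop :=
  ∀ n : ℕ, 4 ≤ n → ¬ ∃ f : Fin n → ℕ, Function.Injective f ∧ (∀ i, f i ∈ G.verts) ∧
    ∀ i j : Fin n, G.Adj (f i) (f j) ↔ ((i : ℕ) + 1) % n = (j : ℕ) ∨ ((j : ℕ) + 1) % n = (i : ℕ)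

/-- A (general) perfect elimination scheme: an ordering of the vertices such that each
vertex is simplicial in the subgraph induced by it and the earlier vertices. -/
def IsPES (l : List ℕ) (G : FGraph) : Prop :=
  l.Nodup ∧ G.verts = {v | v ∈ l} ∧
  ∀ i : Fin l.length, IsSimplicial (G.induce {v | v ∈ l.take ((i : ℕ) + 1)}) (l.get i)

/-- `G` can be reduced to the empty graph by repeatedly deleting simplicial vertices. -/
inductive Reducible : FGraph → Prop
  | empty (G : FGraph) (h : G.verts = ∅) : Reducible G
  | delete (G : FGraph) (v : ℕ) (hv : IsSimplicial G v)
      (h : Reducible (G.deleteVerts {v})) : Reducible G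

/-- `G` is 3-connected: at least 4 vertices, and deleting any two vertices leaves it
connected. -/
def ThreeConnected (G : FGraph) : Prop :=
  4 ≤ G.verts.ncard ∧ ∀ S : Finset ℕ, S.card ≤ 2 → (G.deleteVerts ↑S).Connected

/-- `G` has a tree decomposition of width at most `k`. -/
def HasTreewidthLE (G : FGraph) (k : ℕ) : Prop :=
  ∃ (ι : Type) (T : SimpleGraph ι) (B : ι → Finset ℕ),
    T.Connected ∧ T.IsAcyclic ∧
    (∀ v ∈ G.verts, ∃ i, v ∈ B i) ∧
    (∀ u v, G.Adj u v → ∃ i, u ∈ B i ∧ v ∈ B i) ∧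
    (∀ v ∈ G.verts, (SimpleGraph.induce {i | v ∈ B i} T).Connected) ∧
    (∀ i, (B i).card ≤ k + 1)

/-- `G` is acyclic (a forest). -/
def AcyclicFG (G : FGraph) : Prop := G.coe.IsAcyclic

/-- `G` is a complete graph on its vertex set. -/
def CompleteFG (G : FGraph) : Prop := ∀ u ∈ G.verts, ∀ v ∈ G.verts, u ≠ v → G.Adj u v

/-- The path on the three vertices `0, 1, 2`. -/
def P3 : FGraph := addEdge (addEdge (cliqueGraph ∅) 0 1) 1 2

/-!
The concatenation is checked position by position. A vertex of `P1` has only vertices of `P1`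
before it, among which the new graph agrees with `H1`. The new edges all end in `x`, `y` or `z`,
so a later vertex of `P2` has no neighbour in `P1` and keeps the earlier neighbours it had in
`P2`. The earlier neighbours of `x`, `y`, `z` themselves are the triangles `abc`, `abx`, `axy`.
-/

open Classical in
noncomputable def nbrsIn (G : FGraph) (p : List ℕ) (v : ℕ) : Finset ℕ :=
  {u ∈ p.toFinset | G.Adj u v}

@[simp]
lemma mem_nbrsIn {G : FGraph} {p : List ℕ} {u v : ℕ} : u ∈ nbrsIn G p v ↔ u ∈ p ∧ G.Adj u v := by
  simp [nbrsIn]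

def AttachesToClique (k : ℕ) (G : FGraph) (p : List ℕ) (v : ℕ) : Prop :=
  (nbrsIn G p v).card = k ∧ (nbrsIn G p v : Set ℕ).Pairwise G.Adj

lemma List.pairwise_take_iff_of_symm {α : Type*} {R : α → α → Prop} [Std.Symm R]
    (l : List α) (k : ℕ) :
    (l.take k).Pairwise R ↔
      ∀ i j : Fin l.length, (i : ℕ) < k → (j : ℕ) < k → i ≠ j → R (l.get i) (l.get j) := by
  rw [List.pairwise_iff_getElem]
  constructor
  · intro h i j hi hj hij
    rcases lt_or_gt_of_ne (Fin.val_ne_of_ne hij) with hlt | hlt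
    · have := h i j (by simp; omega) (by simp; omega) hlt
      rwa [List.getElem_take, List.getElem_take] at this
    · have := h j i (by simp; omega) (by simp; omega) hlt
      rw [List.getElem_take, List.getElem_take] at this
      exact Std.Symm.symm _ _ this
  · intro h i j hi hj hij
    simp only [List.length_take, lt_min_iff] at hi hj
    simpa using h ⟨i, hi.2⟩ ⟨j, hj.2⟩ hi.1 hj.1 (Fin.ne_of_val_ne hij.ne)

lemma exists_finset_iff_attachesToClique {k i : ℕ} {l : List ℕ} {H : FGraph} (hl : l.Nodup)
    (hi : i < l.length) :
    (∃ s : Finset (Fin l.length), s.card = k ∧ (∀ j ∈ s, (j : ℕ) < i) ∧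
      (∀ a ∈ s, ∀ b ∈ s, a ≠ b → H.Adj (l.get a) (l.get b)) ∧
      (∀ j : Fin l.length, (j : ℕ) < i → (H.Adj (l.get j) (l.get ⟨i, hi⟩) ↔ j ∈ s))) ↔
      AttachesToClique k H (l.take i) l[i] := by
  classical
  -- `S` is the only possible witness, and `l.get` maps it onto the earlier neighbours.
  set S : Finset (Fin l.length) := {j | (j : ℕ) < i ∧ H.Adj (l.get j) l[i]} with hS
  have hinj : Function.Injective l.get := List.nodup_iff_injective_get.1 hl
  have himage : S.image l.get = nbrsIn H (l.take i) l[i] := by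
    ext u
    simp only [hS, Finset.mem_image, Finset.mem_filter, Finset.mem_univ, true_and, mem_nbrsIn,
      List.mem_take_iff_getElem]
    constructor
    · rintro ⟨j, ⟨hj, hadj⟩, rfl⟩
      exact ⟨⟨j, by omega, rfl⟩, hadj⟩
    · rintro ⟨⟨j, hj, rfl⟩, hadj⟩
      exact ⟨⟨j, by omega⟩, ⟨by simp; omega, hadj⟩, rfl⟩
  constructor
  · rintro ⟨s, hcard, hlt, hclique, hiff⟩
    have hsS : s = S := by
      ext j
      simp only [hS, Finset.mem_filter, Finset.mem_univ, true_and]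
      exact ⟨fun hj => ⟨hlt j hj, (hiff j (hlt j hj)).2 hj⟩, fun hj => (hiff j hj.1).1 hj.2⟩
    subst hsS
    unfold AttachesToClique
    rw [← himage]
    refine ⟨by rw [Finset.card_image_of_injective _ hinj, hcard], ?_⟩
    rintro _ hu _ hw huw
    obtain ⟨a, ha, rfl⟩ := Finset.mem_image.1 hu
    obtain ⟨b, hb, rfl⟩ := Finset.mem_image.1 hw
    exact hclique a ha b hb (fun hab => huw (hab ▸ rfl))
  · rintro ⟨hcard, hclique⟩
    rw [← himage] at hcard hclique
    refine ⟨S, ?_, fun j hj => (Finset.mem_filter.1 hj).2.1, ?_, fun j hj => ?_⟩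
    · rwa [Finset.card_image_of_injective _ hinj] at hcard
    · intro a ha b hb hab
      exact hclique (Finset.mem_image_of_mem _ ha) (Finset.mem_image_of_mem _ hb) (hinj.ne hab)
    · simp [hS, hj]

lemma isPESk_iff {k : ℕ} {l : List ℕ} {H : FGraph} :
    IsPESk k l H ↔ l.Nodup ∧ H.verts = {v | v ∈ l} ∧ k ≤ l.length ∧ (l.take k).Pairwise H.Adj ∧
      ∀ i (hi : i < l.length), k ≤ i → AttachesToClique k H (l.take i) l[i] := by
  have := H.symm
  rw [List.pairwise_take_iff_of_symm]
  refine ⟨fun ⟨hl, hverts, hlen, hclique, hattach⟩ => ⟨hl, hverts, hlen, hclique, fun i hi hki =>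
    (exists_finset_iff_attachesToClique hl hi).1 (hattach ⟨i, hi⟩ hki)⟩,
    fun ⟨hl, hverts, hlen, hclique, hattach⟩ => ⟨hl, hverts, hlen, hclique, fun i hki =>
    (exists_finset_iff_attachesToClique hl i.isLt).2 (hattach i i.isLt hki)⟩⟩

lemma AttachesToClique.of_adj_iff {k : ℕ} {G G' : FGraph} {p : List ℕ} {v : ℕ}
    (h : AttachesToClique k G p v) (hGG' : ∀ u ∈ v :: p, ∀ w ∈ v :: p, G'.Adj u w ↔ G.Adj u w) :
    AttachesToClique k G' p v := by
  have heq : nbrsIn G' p v = nbrsIn G p v := by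
    ext u
    simp only [mem_nbrsIn]
    exact and_congr_right fun hu => hGG' u (by simp [hu]) v (by simp)
  obtain ⟨hcard, hclique⟩ := h
  refine ⟨heq ▸ hcard, ?_⟩
  rw [heq]
  intro u hu w hw huw
  have hu' : u ∈ p := (mem_nbrsIn.1 hu).1
  have hw' : w ∈ p := (mem_nbrsIn.1 hw).1
  exact (hGG' u (by simp [hu']) w (by simp [hw'])).2 (hclique hu hw huw)

lemma attachesToClique_append_iff_of_not_adj {k : ℕ} {G : FGraph} {p q : List ℕ} {v : ℕ}
    (h : ∀ u ∈ p, ¬ G.Adj u v) :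
    AttachesToClique k G (p ++ q) v ↔ AttachesToClique k G q v := by
  have heq : nbrsIn G (p ++ q) v = nbrsIn G q v := by
    ext u
    simp only [mem_nbrsIn, List.mem_append]
    exact ⟨fun ⟨hu, hadj⟩ => ⟨hu.resolve_left fun hp => h u hp hadj, hadj⟩,
      fun ⟨hu, hadj⟩ => ⟨Or.inr hu, hadj⟩⟩
  rw [AttachesToClique, AttachesToClique, heq]

lemma List.getElem_cons_take_subset {α : Type*} (l : List α) {i : ℕ} (hi : i < l.length) :
    l[i] :: l.take i ⊆ l :=
  List.cons_subset.2 ⟨List.getElem_mem hi, List.take_subset _ _⟩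

theorem isPESk_append {k : ℕ} {P1 P2 : List ℕ} {H1 H2 G : FGraph}
    (h1 : IsPESk k P1 H1) (h2 : IsPESk k P2 H2) (hdisj : Disjoint H1.verts H2.verts)
    (hverts : G.verts = H1.verts ∪ H2.verts)
    (hG1 : ∀ u ∈ H1.verts, ∀ w ∈ H1.verts, G.Adj u w ↔ H1.Adj u w)
    (hG2 : ∀ u ∈ H2.verts, ∀ w ∈ H2.verts, G.Adj u w ↔ H2.Adj u w)
    (hhead : ∀ m (hm : m < P2.length), m < k → AttachesToClique k G (P1 ++ P2.take m) P2[m])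
    (htail : ∀ v ∈ P2.drop k, ∀ u ∈ H1.verts, ¬ G.Adj u v) :
    IsPESk k (P1 ++ P2) G := by
  rw [isPESk_iff] at h1 h2 ⊢
  obtain ⟨hnd1, hv1, hlen1, hclique1, hattach1⟩ := h1
  obtain ⟨hnd2, hv2, -, -, hattach2⟩ := h2
  have mem1 {u : ℕ} (hu : u ∈ P1) : u ∈ H1.verts := hv1 ▸ hu
  have mem2 {u : ℕ} (hu : u ∈ P2) : u ∈ H2.verts := hv2 ▸ hu
  refine ⟨hnd1.append hnd2 fun v hv hv' => Set.disjoint_left.1 hdisj (mem1 hv) (mem2 hv'),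
    ?_, ?_, ?_, fun i hi hki => ?_⟩
  · ext v
    simp [hverts, hv1, hv2]
  · simp only [List.length_append]
    omega
  · rw [List.take_append_of_le_length hlen1]
    exact hclique1.imp_of_mem fun hu hw huw =>
      (hG1 _ (mem1 (List.mem_of_mem_take hu)) _ (mem1 (List.mem_of_mem_take hw))).2 huw
  by_cases hi1 : i < P1.length
  · rw [List.take_append_of_le_length hi1.le, List.getElem_append_left hi1]
    have hsub := P1.getElem_cons_take_subset hi1
    exact (hattach1 i hi1 hki).of_adj_iff fun u hu w hw =>
      hG1 u (mem1 (hsub hu)) w (mem1 (hsub hw))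
  obtain ⟨m, rfl⟩ := Nat.exists_eq_add_of_le (not_lt.1 hi1)
  have hm : m < P2.length := by simp only [List.length_append] at hi; omega
  rw [List.take_length_add_append, List.getElem_append_right (by omega)]
  simp only [Nat.add_sub_cancel_left]
  by_cases hmk : m < k
  · exact hhead m hm hmk
  have hdrop : P2[m] ∈ P2.drop k :=
    List.mem_drop_iff_getElem.2 ⟨m - k, by omega, by congr 1; omega⟩
  rw [attachesToClique_append_iff_of_not_adj fun u hu => htail _ hdrop u (mem1 hu)]
  have hsub := P2.getElem_cons_take_subset hm
  exact (hattach2 m hm (not_lt.1 hmk)).of_adj_iff fun u hu w hw =>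
    hG2 u (mem2 (hsub hu)) w (mem2 (hsub hw))

lemma attachesToClique_three {G : FGraph} {p : List ℕ} {v a b c : ℕ}
    (ha : a ∈ p) (hb : b ∈ p) (hc : c ∈ p) (hnbrs : ∀ u ∈ p, G.Adj u v ↔ u = a ∨ u = b ∨ u = c)
    (hab : G.Adj a b) (hbc : G.Adj b c) (hac : G.Adj a c) :
    AttachesToClique 3 G p v := by
  have h : nbrsIn G p v = {a, b, c} := by
    ext u
    simp only [mem_nbrsIn, Finset.mem_insert, Finset.mem_singleton]
    refine ⟨fun ⟨hu, hadj⟩ => (hnbrs u hu).1 hadj, fun hu => ?_⟩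
    have hup : u ∈ p := by rcases hu with rfl | rfl | rfl <;> assumption
    exact ⟨hup, (hnbrs u hup).2 hu⟩
  rw [AttachesToClique, h]
  refine ⟨Finset.card_eq_three.2 ⟨a, b, c, hab.ne, hac.ne, hbc.ne, rfl⟩, ?_⟩
  intro u hu w hw huw
  simp only [Finset.coe_insert, Finset.coe_singleton, Set.mem_insert_iff,
    Set.mem_singleton_iff] at hu hw
  rcases hu with rfl | rfl | rfl <;> rcases hw with rfl | rfl | rfl <;>
    first | exact absurd rfl huw | assumption | exact G.adj_symm ‹_›

lemma addEdge_adj {G : FGraph} {u v p q : ℕ} :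
    (addEdge G u v).Adj p q ↔ G.Adj p q ∨ (p = u ∧ q = v ∧ u ≠ v) ∨ (p = v ∧ q = u ∧ u ≠ v) :=
  Iff.rfl

def glueTriangles (H1 H2 : FGraph) (x y z a b c : ℕ) : FGraph :=
  addEdge (addEdge (addEdge (addEdge (addEdge (addEdge (H1 ⊔ H2) x a) x b) x c) y a) y b) z a

section glueTriangles

variable {H1 H2 : FGraph} {x y z a b c u w : ℕ}

lemma glueTriangles_verts (ha : a ∈ H1.verts) (hb : b ∈ H1.verts) (hc : c ∈ H1.verts)
    (hx : x ∈ H2.verts) (hy : y ∈ H2.verts) (hz : z ∈ H2.verts) :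
    (glueTriangles H1 H2 x y z a b c).verts = H1.verts ∪ H2.verts := by
  simp [glueTriangles, addEdge, Set.insert_eq_of_mem, ha, hb, hc, hx, hy, hz]

lemma glueTriangles_adj_of_adj_left (h : H1.Adj u w) :
    (glueTriangles H1 H2 x y z a b c).Adj u w := by
  simp [glueTriangles, addEdge_adj, h]

lemma glueTriangles_adj_of_adj_right (h : H2.Adj u w) :
    (glueTriangles H1 H2 x y z a b c).Adj u w := by
  simp [glueTriangles, addEdge_adj, h]

lemma glueTriangles_adj_left (hdisj : Disjoint H1.verts H2.verts)
    (hx : x ∈ H2.verts) (hy : y ∈ H2.verts) (hz : z ∈ H2.verts)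
    (hu : u ∈ H1.verts) (hw : w ∈ H1.verts) :
    (glueTriangles H1 H2 x y z a b c).Adj u w ↔ H1.Adj u w := by
  have hu2 : u ∉ H2.verts := Set.disjoint_left.1 hdisj hu
  have hw2 : w ∉ H2.verts := Set.disjoint_left.1 hdisj hw
  have hnadj2 : ¬ H2.Adj u w := fun h => hu2 (H2.edge_vert h)
  simp only [glueTriangles, addEdge_adj, Subgraph.sup_adj]
  grind (splits := 40)

lemma glueTriangles_adj_right (hdisj : Disjoint H1.verts H2.verts)
    (ha : a ∈ H1.verts) (hb : b ∈ H1.verts) (hc : c ∈ H1.verts)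
    (hu : u ∈ H2.verts) (hw : w ∈ H2.verts) :
    (glueTriangles H1 H2 x y z a b c).Adj u w ↔ H2.Adj u w := by
  have hu1 : u ∉ H1.verts := Set.disjoint_right.1 hdisj hu
  have hw1 : w ∉ H1.verts := Set.disjoint_right.1 hdisj hw
  have hnadj1 : ¬ H1.Adj u w := fun h => hu1 (H1.edge_vert h)
  simp only [glueTriangles, addEdge_adj, Subgraph.sup_adj]
  grind (splits := 40)

lemma glueTriangles_adj_cross (hdisj : Disjoint H1.verts H2.verts)
    (hx : x ∈ H2.verts) (hy : y ∈ H2.verts) (hz : z ∈ H2.verts)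
    (hu : u ∈ H1.verts) (hw : w ∈ H2.verts) :
    (glueTriangles H1 H2 x y z a b c).Adj u w ↔
      (w = x ∧ (u = a ∨ u = b ∨ u = c)) ∨ (w = y ∧ (u = a ∨ u = b)) ∨ (w = z ∧ u = a) := by
  have hu2 : u ∉ H2.verts := Set.disjoint_left.1 hdisj hu
  have hw1 : w ∉ H1.verts := Set.disjoint_right.1 hdisj hw
  have hnadj1 : ¬ H1.Adj u w := fun h => hw1 (H1.edge_vert h.symm)
  have hnadj2 : ¬ H2.Adj u w := fun h => hu2 (H2.edge_vert h)
  simp only [glueTriangles, addEdge_adj, Subgraph.sup_adj]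
  grind (splits := 40)

lemma glueTriangles_attachesToClique_x {P1 : List ℕ} (hdisj : Disjoint H1.verts H2.verts)
    (hv1 : H1.verts = {v | v ∈ P1}) (hxy : H2.Adj x y) (hxz : H2.Adj x z)
    (hab : H1.Adj a b) (hbc : H1.Adj b c) (hac : H1.Adj a c) :
    AttachesToClique 3 (glueTriangles H1 H2 x y z a b c) P1 x := by
  have mem1 {u : ℕ} : u ∈ H1.verts ↔ u ∈ P1 := Set.ext_iff.1 hv1 u
  refine attachesToClique_three (mem1.1 (H1.edge_vert hab)) (mem1.1 (H1.edge_vert hbc))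
    (mem1.1 (H1.edge_vert hac.symm)) (fun u hu => ?_) (glueTriangles_adj_of_adj_left hab)
    (glueTriangles_adj_of_adj_left hbc) (glueTriangles_adj_of_adj_left hac)
  rw [glueTriangles_adj_cross hdisj (H2.edge_vert hxy) (H2.edge_vert hxy.symm)
    (H2.edge_vert hxz.symm) (mem1.2 hu) (H2.edge_vert hxy)]
  simp [Subgraph.Adj.ne hxy, Subgraph.Adj.ne hxz]

lemma glueTriangles_attachesToClique_y {P1 : List ℕ} (hdisj : Disjoint H1.verts H2.verts)
    (hv1 : H1.verts = {v | v ∈ P1}) (hxy : H2.Adj x y) (hyz : H2.Adj y z) (hab : H1.Adj a b) :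
    AttachesToClique 3 (glueTriangles H1 H2 x y z a b c) (P1 ++ [x]) y := by
  have mem1 {u : ℕ} : u ∈ H1.verts ↔ u ∈ P1 := Set.ext_iff.1 hv1 u
  have hx : x ∈ H2.verts := H2.edge_vert hxy
  have hy : y ∈ H2.verts := H2.edge_vert hyz
  have cross {u w : ℕ} (hu : u ∈ P1) (hw : w ∈ H2.verts) :=
    glueTriangles_adj_cross (a := a) (b := b) (c := c) hdisj hx hy (H2.edge_vert hyz.symm)
      (mem1.2 hu) hw
  have ha : a ∈ P1 := mem1.1 (H1.edge_vert hab)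
  have hb : b ∈ P1 := mem1.1 (H1.edge_vert hab.symm)
  refine attachesToClique_three (by simp [ha]) (by simp [hb]) (by simp) (fun u hu => ?_)
    (glueTriangles_adj_of_adj_left hab) ((cross hb hx).2 (by simp)) ((cross ha hx).2 (by simp))
  rcases List.mem_append.1 hu with hu | hu
  · rw [cross hu hy]
    simp [(Subgraph.Adj.ne hxy).symm, Subgraph.Adj.ne hyz, hdisj.ne_of_mem (mem1.2 hu) hx]
  · rw [List.mem_singleton.1 hu]
    simpa using glueTriangles_adj_of_adj_right hxy

lemma glueTriangles_attachesToClique_z {P1 : List ℕ} (hdisj : Disjoint H1.verts H2.verts)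
    (hv1 : H1.verts = {v | v ∈ P1}) (hxy : H2.Adj x y) (hxz : H2.Adj x z) (hyz : H2.Adj y z)
    (hab : H1.Adj a b) :
    AttachesToClique 3 (glueTriangles H1 H2 x y z a b c) (P1 ++ [x, y]) z := by
  have mem1 {u : ℕ} : u ∈ H1.verts ↔ u ∈ P1 := Set.ext_iff.1 hv1 u
  have hx : x ∈ H2.verts := H2.edge_vert hxy
  have hy : y ∈ H2.verts := H2.edge_vert hyz
  have hz : z ∈ H2.verts := H2.edge_vert hyz.symm
  have cross {u w : ℕ} (hu : u ∈ P1) (hw : w ∈ H2.verts) :=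
    glueTriangles_adj_cross (a := a) (b := b) (c := c) hdisj hx hy hz (mem1.2 hu) hw
  have ha : a ∈ P1 := mem1.1 (H1.edge_vert hab)
  refine attachesToClique_three (by simp [ha]) (by simp) (by simp) (fun u hu => ?_)
    ((cross ha hx).2 (by simp)) (glueTriangles_adj_of_adj_right hxy) ((cross ha hy).2 (by simp))
  rcases List.mem_append.1 hu with hu | hu
  · rw [cross hu hz]
    simp [(Subgraph.Adj.ne hxz).symm, (Subgraph.Adj.ne hyz).symm, hdisj.ne_of_mem (mem1.2 hu) hx,
      hdisj.ne_of_mem (mem1.2 hu) hy]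
  · rcases List.mem_pair.1 hu with rfl | rfl
    · simpa using glueTriangles_adj_of_adj_right hxz
    · simpa using glueTriangles_adj_of_adj_right hyz

end glueTriangles

theorem pes_concatenation (H1 H2 : FGraph) (P1 P2 : List ℕ) (x y z a b c : ℕ)
    (h1 : IsPESk 3 P1 H1) (h2 : IsPESk 3 P2 H2)
    (hdisj : Disjoint H1.verts H2.verts)
    (hP2 : ∃ rest : List ℕ, P2 = x :: y :: z :: rest)
    (hab : H1.Adj a b) (hbc : H1.Adj b c) (hac : H1.Adj a c) :
    IsPESk 3 (P1 ++ P2) (addEdge (addEdge (addEdge (addEdge (addEdge (addEdge (H1 ⊔ H2) x a) x b) x c) y a) y b) z a) := by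
  obtain ⟨rest, rfl⟩ := hP2
  change IsPESk 3 _ (glueTriangles H1 H2 x y z a b c)
  obtain ⟨hxy, hxz, hyz⟩ : H2.Adj x y ∧ H2.Adj x z ∧ H2.Adj y z := by
    simpa [and_assoc] using (isPESk_iff.1 h2).2.2.2.1
  have hx : x ∈ H2.verts := H2.edge_vert hxy
  have hy : y ∈ H2.verts := H2.edge_vert hyz
  have hz : z ∈ H2.verts := H2.edge_vert hyz.symm
  have ha : a ∈ H1.verts := H1.edge_vert hab
  have hb : b ∈ H1.verts := H1.edge_vert hbc
  have hc : c ∈ H1.verts := H1.edge_vert hac.symm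
  refine isPESk_append h1 h2 hdisj (glueTriangles_verts ha hb hc hx hy hz)
    (fun u hu w hw => glueTriangles_adj_left hdisj hx hy hz hu hw)
    (fun u hu w hw => glueTriangles_adj_right hdisj ha hb hc hu hw) (fun m hm hm3 => ?_) ?_
  · interval_cases m
    · simpa using glueTriangles_attachesToClique_x hdisj h1.2.1 hxy hxz hab hbc hac
    · simpa using glueTriangles_attachesToClique_y (c := c) hdisj h1.2.1 hxy hyz hab
    · simpa using glueTriangles_attachesToClique_z (b := b) (c := c) hdisj h1.2.1 hxy hxz hyz hab
  intro v hv u hu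
  have hnd := h2.1
  simp only [List.drop_succ_cons, List.drop_zero] at hv
  simp only [List.nodup_cons, List.mem_cons, not_or] at hnd
  rw [glueTriangles_adj_cross hdisj hx hy hz hu (by rw [h2.2.1]; simp [hv])]
  grind
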